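/- Let G be a d-regular graph and x ∈ R^n a δn-sparse vector with Rayleigh quotient λ. Then every threshold set S_t = {i : |normalized x|_i ≥ t} for t > 0 has size at most δn, and consequently the sparse Cheeger rounding produces a small set: there exists a nonempty S with |S| ≤ δn and φ(S) ≤ sqrt(λ(2−λ)). -/

import Mathlib

/-!
For `t > 0` the set `S_t` lies in the support of `x`, so it has at most `δn` elements; the same
holds for the superlevel sets of `x²`, which are the `S_t` under another parametrisation.

For the rounding, sweep over the superlevel sets of `g = x²`. By the coarea formula,
`∫₀^{max g} |S_t| dt = ‖x‖²` and `2 ∫₀^{max g} cut(S_t) dt = ∑ᵢⱼ Aᵢⱼ |xᵢ² - xⱼ²|`. Writing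
`|xᵢ² - xⱼ²| = ||xᵢ| - |xⱼ|| (|xᵢ| + |xⱼ|)`, Cauchy–Schwarz bounds the latter sum by
`2 √((d‖x‖²)² - (|x|ᵀA|x|)²)`, and `|x|ᵀA|x| ≥ |xᵀAx| = |1 - λ| d‖x‖²` turns this into
`2 d‖x‖² √(λ(2 - λ))`. Hence `cut(S_t) ≤ √(λ(2 - λ)) d |S_t|` for some `t > 0`.
-/

open Finset Matrix MeasureTheory

lemma card_le_ncard_support {ι M : Type*} [Finite ι] [Zero M] {x : ι → M} {S : Finset ι}
    (hS : ∀ i ∈ S, x i ≠ 0) : S.card ≤ (Function.support x).ncard := by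
  rw [← Set.ncard_coe_finset]
  exact Set.ncard_le_ncard (fun i hi => hS i hi) (Set.toFinite _)

section Spectral

variable {ι : Type*} [Fintype ι]

lemma dotProduct_mulVec_eq_of_rayleigh {K : Type*} [Field K] [DecidableEq ι] {A : Matrix ι ι K}
    {d lam : K} {x : ι → K} (hd : d ≠ 0) (hx : x ⬝ᵥ x ≠ 0)
    (hlam : (x ⬝ᵥ (1 - d⁻¹ • A) *ᵥ x) / (x ⬝ᵥ x) = lam) :
    x ⬝ᵥ A *ᵥ x = (1 - lam) * d * (x ⬝ᵥ x) := by
  rw [sub_mulVec, one_mulVec, dotProduct_sub, smul_mulVec, dotProduct_smul, smul_eq_mul,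
    div_eq_iff hx] at hlam
  field_simp at hlam ⊢
  linear_combination -hlam

lemma abs_dotProduct_mulVec_le {A : Matrix ι ι ℝ} (hA : ∀ i j, 0 ≤ A i j) (x : ι → ℝ) :
    |x ⬝ᵥ A *ᵥ x| ≤ |x| ⬝ᵥ A *ᵥ |x| := by
  simp only [dotProduct, mulVec, Finset.mul_sum, Pi.abs_apply]
  refine (abs_sum_le_sum_abs _ _).trans (sum_le_sum fun i _ =>
    (abs_sum_le_sum_abs _ _).trans (le_of_eq (sum_congr rfl fun j _ => ?_)))
  rw [abs_mul, abs_mul, abs_of_nonneg (hA i j)]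

lemma sum_mul_add_sq {A : Matrix ι ι ℝ} {d : ℝ} (hA : A.IsSymm) (hrow : ∀ i, ∑ j, A i j = d)
    (y z : ι → ℝ) : ∑ i, ∑ j, A i j * (y i + z j) ^ 2
      = d * ∑ i, y i ^ 2 + d * ∑ j, z j ^ 2 + 2 * (y ⬝ᵥ A *ᵥ z) := by
  have hcol : ∀ j, ∑ i, A i j = d := fun j => by
    simpa only [hA.apply] using hrow j
  have hrow' : ∑ i, ∑ j, A i j * y i ^ 2 = d * ∑ i, y i ^ 2 := by
    simp only [← sum_mul, hrow, Finset.mul_sum]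
  have hcol' : ∑ i, ∑ j, A i j * z j ^ 2 = d * ∑ j, z j ^ 2 := by
    rw [sum_comm]
    simp only [← sum_mul, hcol, Finset.mul_sum]
  simp only [dotProduct, mulVec, Finset.mul_sum, ← hrow', ← hcol', ← sum_add_distrib]
  exact sum_congr rfl fun i _ => sum_congr rfl fun j _ => by ring

lemma sq_sum_mul_abs_sq_sub_sq_le {A : Matrix ι ι ℝ} {d : ℝ} (hA0 : ∀ i j, 0 ≤ A i j)
    (hA : A.IsSymm) (hrow : ∀ i, ∑ j, A i j = d) (y : ι → ℝ) :
    (∑ i, ∑ j, A i j * |y i ^ 2 - y j ^ 2|) ^ 2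
      ≤ 4 * ((d * ∑ i, y i ^ 2) ^ 2 - (y ⬝ᵥ A *ᵥ y) ^ 2) := by
  have hminus := sum_mul_add_sq hA hrow y (-y)
  have hplus := sum_mul_add_sq hA hrow y y
  simp only [Pi.neg_apply, neg_sq, mulVec_neg, dotProduct_neg, ← sub_eq_add_neg] at hminus
  have hCS := sum_sq_le_sum_mul_sum_of_sq_le_mul (univ : Finset (ι × ι))
    (r := fun p => A p.1 p.2 * |y p.1 ^ 2 - y p.2 ^ 2|)
    (f := fun p => A p.1 p.2 * (y p.1 - y p.2) ^ 2) (g := fun p => A p.1 p.2 * (y p.1 + y p.2) ^ 2)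
    (fun p _ => mul_nonneg (hA0 _ _) (sq_nonneg _)) (fun p _ => mul_nonneg (hA0 _ _) (sq_nonneg _))
    (fun p _ => le_of_eq (by rw [mul_pow, sq_abs]; ring))
  simp only [Fintype.sum_prod_type] at hCS
  rw [hminus, hplus] at hCS
  linarith

theorem sum_mul_abs_sq_sub_sq_le_of_rayleigh [DecidableEq ι] {A : Matrix ι ι ℝ} {d lam : ℝ}
    (hA0 : ∀ i j, 0 ≤ A i j) (hA : A.IsSymm) (hrow : ∀ i, ∑ j, A i j = d) (hd : 0 < d)
    {x : ι → ℝ} (hx : x ≠ 0) (hlam : (x ⬝ᵥ (1 - d⁻¹ • A) *ᵥ x) / (x ⬝ᵥ x) = lam) :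
    ∑ i, ∑ j, A i j * |x i ^ 2 - x j ^ 2| ≤ 2 * (√(lam * (2 - lam)) * d) * ∑ i, x i ^ 2 := by
  have hquad := dotProduct_mulVec_eq_of_rayleigh hd.ne' (dotProduct_self_eq_zero.not.mpr hx) hlam
  rw [show x ⬝ᵥ x = ∑ i, x i ^ 2 by simp only [dotProduct, sq]] at hquad
  have hCS := sq_sum_mul_abs_sq_sub_sq_le hA0 hA hrow |x|
  simp only [Pi.abs_apply, sq_abs] at hCS
  have hB : (x ⬝ᵥ A *ᵥ x) ^ 2 ≤ (|x| ⬝ᵥ A *ᵥ |x|) ^ 2 := by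
    simpa only [sq_abs] using pow_le_pow_left₀ (abs_nonneg _) (abs_dotProduct_mulVec_le hA0 x) 2
  rw [hquad] at hB
  have hsq : (∑ i, ∑ j, A i j * |x i ^ 2 - x j ^ 2|) ^ 2
      ≤ (2 * d * ∑ i, x i ^ 2) ^ 2 * (lam * (2 - lam)) :=
    calc _ ≤ 4 * ((d * ∑ i, x i ^ 2) ^ 2 - (|x| ⬝ᵥ A *ᵥ |x|) ^ 2) := hCS
      _ ≤ 4 * ((d * ∑ i, x i ^ 2) ^ 2 - ((1 - lam) * d * ∑ i, x i ^ 2) ^ 2) := by linarith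
      _ = _ := by ring
  calc ∑ i, ∑ j, A i j * |x i ^ 2 - x j ^ 2|
      ≤ √((2 * d * ∑ i, x i ^ 2) ^ 2 * (lam * (2 - lam))) := Real.le_sqrt_of_sq_le hsq
    _ = 2 * (√(lam * (2 - lam)) * d) * ∑ i, x i ^ 2 := by
      rw [Real.sqrt_mul (sq_nonneg _), Real.sqrt_sq (by positivity)]
      ring

end Spectral

lemma intervalIntegrable_ite_le (a u v : ℝ) :
    IntervalIntegrable (fun t => if t ≤ a then (1 : ℝ) else 0) volume u v :=
  Antitone.intervalIntegrable fun s t hst => by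
    by_cases ht : t ≤ a
    · simp [ht, hst.trans ht]
    · simp only [ht, if_false]
      split_ifs <;> norm_num

lemma intervalIntegrable_const_mul_ite_sub_ite (a b c u v : ℝ) :
    IntervalIntegrable (fun t => a * ((if t ≤ b then (1 : ℝ) else 0) - if t ≤ c then 1 else 0))
      volume u v :=
  ((intervalIntegrable_ite_le _ _ _).sub (intervalIntegrable_ite_le _ _ _)).const_mul _

lemma intervalIntegrable_finsetSum {κ : Type*} (s : Finset κ) {f : κ → ℝ → ℝ} {u v : ℝ}
    (h : ∀ k ∈ s, IntervalIntegrable (f k) volume u v) :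
    IntervalIntegrable (fun t => ∑ k ∈ s, f k t) volume u v := by
  simpa only [← Finset.sum_apply] using IntervalIntegrable.sum s h

lemma integral_ite_le {a M : ℝ} (ha : 0 ≤ a) (haM : a ≤ M) :
    ∫ t in 0..M, (if t ≤ a then (1 : ℝ) else 0) = a := by
  have : (fun t : ℝ => if t ≤ a then (1 : ℝ) else 0) = (Set.Iic a).indicator 1 := by
    ext t
    simp [Set.indicator_apply]
  rw [this, intervalIntegral.integral_of_le (ha.trans haM),
    integral_indicator_one measurableSet_Iic, measureReal_restrict_apply measurableSet_Iic,
    Set.inter_comm, Set.Ioc_inter_Iic, min_eq_right haM, Real.volume_real_Ioc_of_le ha, sub_zero]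

lemma exists_mem_Ioo_le_of_integral_le {f g : ℝ → ℝ} {a b : ℝ} (hab : a < b)
    (hf : IntervalIntegrable f volume a b) (hg : IntervalIntegrable g volume a b)
    (h : ∫ t in a..b, f t ≤ ∫ t in a..b, g t) : ∃ t ∈ Set.Ioo a b, f t ≤ g t := by
  by_contra! hlt
  have := intervalIntegral.intervalIntegral_pos_of_pos_on (hf.sub hg)
    (fun t ht => sub_pos.mpr (hlt t ht)) hab
  rw [intervalIntegral.integral_sub hf hg] at this
  linarith

section Sweep

variable {ι : Type*} [Fintype ι]

def superlevel {α : Type*} [LE α] [DecidableLE α] (g : ι → α) (t : α) : Finset ι :=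
  {i | t ≤ g i}

def Matrix.cutWeight [DecidableEq ι] (A : Matrix ι ι ℝ) (S : Finset ι) : ℝ :=
  ∑ i ∈ S, ∑ j ∈ Sᶜ, A i j

lemma card_superlevel_eq_sum (g : ι → ℝ) (t : ℝ) :
    ((superlevel g t).card : ℝ) = ∑ i, if t ≤ g i then 1 else 0 := by
  rw [sum_boole]
  rfl

lemma cutWeight_superlevel_eq_sum [DecidableEq ι] (A : Matrix ι ι ℝ) (g : ι → ℝ) (t : ℝ) :
    A.cutWeight (superlevel g t) = ∑ i, ∑ j, A i j *
      ((if t ≤ g i then 1 else 0) - if t ≤ min (g i) (g j) then 1 else 0) := by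
  rw [cutWeight, superlevel, sum_filter, compl_filter]
  refine sum_congr rfl fun i _ => ?_
  rw [sum_filter]
  by_cases hi : t ≤ g i
  · simp only [hi, if_true, le_min_iff, true_and]
    refine sum_congr rfl fun j _ => ?_
    by_cases hj : t ≤ g j <;> simp [hj]
  · simp [hi]

lemma intervalIntegrable_card_superlevel (g : ι → ℝ) (u v : ℝ) :
    IntervalIntegrable (fun t => ((superlevel g t).card : ℝ)) volume u v := by
  simp_rw [card_superlevel_eq_sum]
  exact intervalIntegrable_finsetSum _ fun i _ => intervalIntegrable_ite_le _ _ _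

lemma intervalIntegrable_cutWeight_superlevel [DecidableEq ι] (A : Matrix ι ι ℝ) (g : ι → ℝ)
    (u v : ℝ) : IntervalIntegrable (fun t => A.cutWeight (superlevel g t)) volume u v := by
  simp_rw [cutWeight_superlevel_eq_sum]
  exact intervalIntegrable_finsetSum _ fun i _ => intervalIntegrable_finsetSum _ fun j _ =>
    intervalIntegrable_const_mul_ite_sub_ite _ _ _ _ _

lemma integral_card_superlevel {g : ι → ℝ} {M : ℝ} (hg : ∀ i, 0 ≤ g i ∧ g i ≤ M) :
    ∫ t in 0..M, ((superlevel g t).card : ℝ) = ∑ i, g i := by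
  simp_rw [card_superlevel_eq_sum]
  rw [intervalIntegral.integral_finsetSum fun i _ => intervalIntegrable_ite_le _ _ _]
  exact sum_congr rfl fun i _ => integral_ite_le (hg i).1 (hg i).2

lemma integral_cutWeight_superlevel [DecidableEq ι] (A : Matrix ι ι ℝ) {g : ι → ℝ} {M : ℝ}
    (hg : ∀ i, 0 ≤ g i ∧ g i ≤ M) :
    ∫ t in 0..M, A.cutWeight (superlevel g t) = ∑ i, ∑ j, A i j * (g i - min (g i) (g j)) := by
  simp_rw [cutWeight_superlevel_eq_sum]
  rw [intervalIntegral.integral_finsetSum fun i _ => intervalIntegrable_finsetSum _ fun j _ =>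
    intervalIntegrable_const_mul_ite_sub_ite (A i j) (g i) (min (g i) (g j)) _ _]
  refine sum_congr rfl fun i _ => ?_
  rw [intervalIntegral.integral_finsetSum fun j _ =>
    intervalIntegrable_const_mul_ite_sub_ite (A i j) (g i) (min (g i) (g j)) _ _]
  refine sum_congr rfl fun j _ => ?_
  rw [intervalIntegral.integral_const_mul, intervalIntegral.integral_sub
    (intervalIntegrable_ite_le _ _ _) (intervalIntegrable_ite_le _ _ _),
    integral_ite_le (hg i).1 (hg i).2,
    integral_ite_le (le_min (hg i).1 (hg j).1) ((min_le_left _ _).trans (hg i).2)]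

lemma two_mul_sum_mul_sub_min {A : Matrix ι ι ℝ} (hA : A.IsSymm) (g : ι → ℝ) :
    2 * ∑ i, ∑ j, A i j * (g i - min (g i) (g j)) = ∑ i, ∑ j, A i j * |g i - g j| := by
  have hswap : ∑ i, ∑ j, A i j * (g i - min (g i) (g j))
      = ∑ i, ∑ j, A i j * (g j - min (g i) (g j)) := by
    rw [sum_comm]
    exact sum_congr rfl fun i _ => sum_congr rfl fun j _ => by rw [hA.apply i j, min_comm]
  have habs : ∀ a b : ℝ, |a - b| = (a - min a b) + (b - min a b) := fun a b => by
    rcases le_total a b with h | h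
    · rw [min_eq_left h, abs_of_nonpos (by linarith)]
      ring
    · rw [min_eq_right h, abs_of_nonneg (by linarith)]
      ring
  conv_lhs => rw [two_mul]; enter [2]; rw [hswap]
  simp only [habs, mul_add, sum_add_distrib]

theorem exists_superlevel_cutWeight_le [DecidableEq ι] {A : Matrix ι ι ℝ} (hA : A.IsSymm)
    {g : ι → ℝ} (hg : ∀ i, 0 ≤ g i) (hpos : ∃ i, 0 < g i) {K : ℝ}
    (h : ∑ i, ∑ j, A i j * |g i - g j| ≤ 2 * K * ∑ i, g i) :
    ∃ t, 0 < t ∧ (superlevel g t).Nonempty ∧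
      A.cutWeight (superlevel g t) ≤ K * (superlevel g t).card := by
  obtain ⟨i₀, hi₀⟩ := hpos
  obtain ⟨imax, -, hmax⟩ := exists_max_image univ g ⟨i₀, mem_univ _⟩
  have hgM : ∀ i, 0 ≤ g i ∧ g i ≤ g imax := fun i => ⟨hg i, hmax i (mem_univ _)⟩
  have hint : ∫ t in 0..g imax, A.cutWeight (superlevel g t)
      ≤ ∫ t in 0..g imax, K * (superlevel g t).card := by
    rw [integral_cutWeight_superlevel A hgM, intervalIntegral.integral_const_mul,
      integral_card_superlevel hgM]
    linarith [two_mul_sum_mul_sub_min hA g]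
  obtain ⟨t, ⟨ht, htM⟩, hle⟩ := exists_mem_Ioo_le_of_integral_le (hi₀.trans_le (hgM i₀).2)
    (intervalIntegrable_cutWeight_superlevel A g _ _)
    ((intervalIntegrable_card_superlevel g _ _).const_mul K) hint
  exact ⟨t, ht, ⟨imax, by simpa [superlevel] using htM.le⟩, hle⟩

end Sweep

theorem sparse_cheeger_rounding_general (n d : ℕ) (hd : 0 < d)
    (A : Matrix (Fin n) (Fin n) ℝ) (hsymm : A.IsSymm)
    (h01 : ∀ i j, A i j = 0 ∨ A i j = 1)
    (hreg : ∀ i, ∑ j, A i j = d)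
    (δ : ℝ) (x : Fin n → ℝ) (hx : x ≠ 0)
    (hsparse : ((Function.support x).ncard : ℝ) ≤ δ * n)
    (m : ℝ)
    (lam : ℝ)
    (hlam : (x ⬝ᵥ (1 - (d : ℝ)⁻¹ • A).mulVec x) / (x ⬝ᵥ x) = lam) :
    (∀ t : ℝ, 0 < t → t ≤ 1 →
        ((({i | t ≤ |x i| / m} : Finset (Fin n)).card : ℝ) ≤ δ * n)) ∧
    ∃ S : Finset (Fin n), S.Nonempty ∧ ((S.card : ℝ) ≤ δ * n) ∧
      (∑ i ∈ S, ∑ j ∈ Sᶜ, A i j) / (d * S.card)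
        ≤ Real.sqrt (lam * (2 - lam)) := by
  have hsupp : ∀ S : Finset (Fin n), (∀ i ∈ S, x i ≠ 0) → (S.card : ℝ) ≤ δ * n :=
    fun S hS => le_trans (by exact_mod_cast card_le_ncard_support hS) hsparse
  refine ⟨fun t ht _ => hsupp _ fun i hi hxi => ?_, ?_⟩
  · linarith [(by simpa [hxi] using hi : t ≤ 0)]
  have hA0 : ∀ i j, 0 ≤ A i j := fun i j => by rcases h01 i j with h | h <;> simp [h]
  have hd' : (0 : ℝ) < d := by exact_mod_cast hd
  obtain ⟨i₀, hi₀⟩ := Function.ne_iff.mp hx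
  obtain ⟨t, ht, hne, hcut⟩ := exists_superlevel_cutWeight_le hsymm (fun i => sq_nonneg (x i))
    ⟨i₀, pow_two_pos_of_ne_zero hi₀⟩
    (sum_mul_abs_sq_sub_sq_le_of_rayleigh hA0 hsymm hreg hd' hx hlam)
  refine ⟨superlevel _ t, hne, hsupp _ fun i hi hxi => ?_, ?_⟩
  · linarith [(by simpa [superlevel, hxi] using hi : t ≤ 0)]
  · have hcard : (0 : ℝ) < (superlevel (fun i => x i ^ 2) t).card := by
      exact_mod_cast hne.card_pos
    rw [div_le_iff₀ (by positivity)]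
    exact hcut.trans_eq (by ring)

/-- Sparse Cheeger rounding: if x is a nonzero δn-sparse vector with Rayleigh
quotient λ, then (a) every threshold set of the normalized vector
y_i = |x_i| / max_j |x_j| (for t > 0) has size at most δn, and (b) there exists
a nonempty set S with |S| ≤ δn and φ(S) ≤ sqrt(λ(2−λ)). -/
theorem sparse_cheeger_rounding (n d : ℕ) (hd : 0 < d)
    (A : Matrix (Fin n) (Fin n) ℝ) (hsymm : A.IsSymm)
    (h01 : ∀ i j, A i j = 0 ∨ A i j = 1) (hdiag : ∀ i, A i i = 0)
    (hreg : ∀ i, ∑ j, A i j = d)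
    (δ : ℝ) (x : Fin n → ℝ) (hx : x ≠ 0)
    (hsparse : ((Function.support x).ncard : ℝ) ≤ δ * n)
    (m : ℝ) (hm : IsGreatest (Set.range fun j => |x j|) m)
    (lam : ℝ)
    (hlam : (x ⬝ᵥ (1 - (d : ℝ)⁻¹ • A).mulVec x) / (x ⬝ᵥ x) = lam) :
    (∀ t : ℝ, 0 < t → t ≤ 1 →
        ((({i | t ≤ |x i| / m} : Finset (Fin n)).card : ℝ) ≤ δ * n)) ∧
    ∃ S : Finset (Fin n), S.Nonempty ∧ ((S.card : ℝ) ≤ δ * n) ∧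
      (∑ i ∈ S, ∑ j ∈ Sᶜ, A i j) / (d * S.card)
        ≤ Real.sqrt (lam * (2 - lam)) :=
  sparse_cheeger_rounding_general n d hd A hsymm h01 hreg δ x hx hsparse m lam hlam
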